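/- Let X be a real M×N matrix with singular value decomposition X = U D Vᵀ, where P = min(M,N), U is M×P and V is N×P with orthonormal columns (UᵀU = I_P, VᵀV = I_P), and D is a P×P diagonal matrix with nonnegative diagonal entries. Fix λ ≥ 0 and let D̃ be the diagonal matrix with D̃[r,r] = max(D[r,r] − λ, 0). Then the matrix A* = U D̃ Vᵀ minimizes the function A ↦ ½‖X − A‖_F² + λ‖A‖_* over all real M×N matrices A; that is, ½‖X − A*‖_F² + λ‖A*‖_* ≤ ½‖X − A‖_F² + λ‖A‖_* for every A. (Proposition 2: soft-thresholded SVD solves the nuclear-norm-penalized approximation problem.) -/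

import Mathlib

/-!
Put `A* = U D̃ Vᵀ` and `B = X - A* = U C Vᵀ` with `C = diag (min (D r r) λ)`. Expanding the square,
`½‖X - A‖_F² ≥ ½‖B‖_F² - ⟨B, A⟩ + ⟨B, A*⟩`, so it suffices that `B` is a subgradient of `λ‖·‖_*`
at `A*`: `⟨B, A*⟩ = λ‖A*‖_*` and `⟨B, A⟩ ≤ λ‖A‖_*` for all `A`.
The equality holds because `√(A*ᵀ A*) = V D̃ Vᵀ`, so `‖A*‖_* = tr D̃`, while `⟨B, A*⟩ = tr (C D̃)`
and `C r r = λ` wherever `D̃ r r ≠ 0`.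
The inequality is trace duality `⟨B, A⟩ ≤ ‖B‖_op ‖A‖_*`, computed in an orthonormal eigenbasis of
`AᵀA`, together with `‖B‖_op ≤ max |C r r| ≤ λ`.
-/

open Matrix BigOperators

/-- The nuclear norm of a real matrix: the sum of its singular values, i.e. the sum of
the square roots of the (nonnegative real) eigenvalues of `Aᵀ * A` (= `Aᴴ * A` over `ℝ`). -/
noncomputable def nuclearNorm {M N : ℕ} (A : Matrix (Fin M) (Fin N) ℝ) : ℝ :=
  ∑ i, Real.sqrt ((Matrix.isHermitian_conjTranspose_mul_self A).eigenvalues i)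

/-- Squared Frobenius norm: sum of squared entries. -/
noncomputable def frobSq {M N : ℕ} (A : Matrix (Fin M) (Fin N) ℝ) : ℝ :=
  ∑ m, ∑ n, (A m n) ^ 2

open scoped InnerProductSpace MatrixOrder Matrix.Norms.L2Operator

namespace Matrix

section Euclidean

variable {m n : Type*} [Fintype m] [Fintype n] [DecidableEq n]

theorem trace_eq_sum_inner_toEuclideanLin {ι : Type*} [Fintype ι] (B : Matrix n n ℝ)
    (b : OrthonormalBasis ι ℝ (EuclideanSpace ℝ n)) :
    B.trace = ∑ i, ⟪b i, toEuclideanLin B (b i)⟫_ℝ := by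
  rw [← LinearMap.trace_eq_sum_inner, toEuclideanLin_eq_toLin_orthonormal, trace_toLin_eq]

theorem inner_toEuclideanLin_transpose_mul [DecidableEq m] (B A : Matrix m n ℝ)
    (x y : EuclideanSpace ℝ n) :
    ⟪x, toEuclideanLin (Bᵀ * A) y⟫_ℝ = ⟪toEuclideanLin B x, toEuclideanLin A y⟫_ℝ := by
  rw [← conjTranspose_eq_transpose_of_trivial, toLpLin_mul (q := 2),
    toEuclideanLin_conjTranspose_eq_adjoint, LinearMap.comp_apply, LinearMap.adjoint_inner_right]

theorem norm_toEuclideanLin_le (B : Matrix m n ℝ) (x : EuclideanSpace ℝ n) :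
    ‖toEuclideanLin B x‖ ≤ ‖B‖ * ‖x‖ :=
  l2_opNorm_mulVec B x

theorem IsHermitian.toEuclideanLin_eigenvectorBasis {H : Matrix n n ℝ} (hH : H.IsHermitian)
    (i : n) :
    toEuclideanLin H (hH.eigenvectorBasis i) = hH.eigenvalues i • hH.eigenvectorBasis i := by
  rw [toLpLin_apply, hH.mulVec_eigenvectorBasis]
  rfl

theorem norm_toEuclideanLin_eigenvectorBasis [DecidableEq m] (A : Matrix m n ℝ) (i : n) :
    ‖toEuclideanLin A ((isHermitian_conjTranspose_mul_self A).eigenvectorBasis i)‖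
      = √((isHermitian_conjTranspose_mul_self A).eigenvalues i) := by
  set hH := isHermitian_conjTranspose_mul_self A
  rw [← Real.sqrt_sq (norm_nonneg _), ← real_inner_self_eq_norm_sq,
    ← inner_toEuclideanLin_transpose_mul, ← conjTranspose_eq_transpose_of_trivial,
    hH.toEuclideanLin_eigenvectorBasis, real_inner_smul_right, real_inner_self_eq_norm_sq,
    hH.eigenvectorBasis.orthonormal.1 i, one_pow, mul_one]

end Euclidean

theorem l2_opNorm_le_one_of_conjTranspose_mul_self_eq_one {𝕜 m n : Type*} [RCLike 𝕜] [Fintype m]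
    [Fintype n] [DecidableEq n] {U : Matrix m n 𝕜} (hU : Uᴴ * U = 1) : ‖U‖ ≤ 1 := by
  have h_one : ‖(1 : Matrix n n 𝕜)‖ ≤ 1 := by
    rw [← diagonal_one, l2_opNorm_diagonal]
    exact (pi_norm_le_iff_of_nonneg zero_le_one).2 fun _ => norm_one.le
  have h_sq := l2_opNorm_conjTranspose_mul_self U
  rw [hU] at h_sq
  nlinarith [norm_nonneg U]

section Isometries

variable {m n p : Type*} [Fintype m] [Fintype n] [Fintype p] [DecidableEq p]
  {U : Matrix m p ℝ} {V : Matrix n p ℝ}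

theorem l2_opNorm_mul_diagonal_mul_transpose_le [DecidableEq n] (hU : Uᵀ * U = 1)
    (hV : Vᵀ * V = 1) (c : p → ℝ) : ‖U * diagonal c * Vᵀ‖ ≤ ‖c‖ := by
  rw [← conjTranspose_eq_transpose_of_trivial] at hU hV ⊢
  calc ‖U * diagonal c * Vᴴ‖ ≤ ‖U‖ * ‖diagonal c‖ * ‖Vᴴ‖ :=
        (l2_opNorm_mul _ _).trans (by gcongr; exact l2_opNorm_mul _ _)
    _ ≤ 1 * ‖c‖ * 1 := by
        rw [l2_opNorm_diagonal, l2_opNorm_conjTranspose]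
        gcongr
        exacts [l2_opNorm_le_one_of_conjTranspose_mul_self_eq_one hU,
          l2_opNorm_le_one_of_conjTranspose_mul_self_eq_one hV]
    _ = ‖c‖ := by ring

theorem trace_mul_diagonal_mul_transpose (hV : Vᵀ * V = 1) (s : p → ℝ) :
    trace (V * diagonal s * Vᵀ) = ∑ r, s r := by
  rw [trace_mul_comm, ← Matrix.mul_assoc, hV, Matrix.one_mul, trace_diagonal]

theorem trace_transpose_mul_of_svd (hU : Uᵀ * U = 1) (hV : Vᵀ * V = 1) (c s : p → ℝ) :
    trace ((U * diagonal c * Vᵀ)ᵀ * (U * diagonal s * Vᵀ)) = ∑ r, c r * s r := by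
  have h : (U * diagonal c * Vᵀ)ᵀ * (U * diagonal s * Vᵀ)
      = V * diagonal (fun r => c r * s r) * Vᵀ := by
    simp only [transpose_mul, transpose_transpose, diagonal_transpose, Matrix.mul_assoc]
    rw [← Matrix.mul_assoc Uᵀ, hU, Matrix.one_mul, ← Matrix.mul_assoc (diagonal c),
      diagonal_mul_diagonal]
  rw [h, trace_mul_diagonal_mul_transpose hV]

theorem sqrt_conjTranspose_mul_self_of_svd [DecidableEq n] (hU : Uᵀ * U = 1)
    (hV : Vᵀ * V = 1) {s : p → ℝ} (hs : ∀ r, 0 ≤ s r) :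
    CFC.sqrt ((U * diagonal s * Vᵀ)ᴴ * (U * diagonal s * Vᵀ)) = V * diagonal s * Vᵀ := by
  refine CFC.sqrt_unique ?_ ?_
  · rw [conjTranspose_eq_transpose_of_trivial]
    simp only [transpose_mul, transpose_transpose, diagonal_transpose, Matrix.mul_assoc]
    rw [← Matrix.mul_assoc Uᵀ, ← Matrix.mul_assoc Vᵀ, hU, hV]
  · rw [nonneg_iff_posSemidef]
    simpa [conjTranspose_eq_transpose_of_trivial] using
      (posSemidef_diagonal_iff.2 hs).mul_mul_conjTranspose_same V

end Isometries

end Matrix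

section FrobeniusNorm

variable {M N : ℕ}

theorem frobSq_eq_trace (A : Matrix (Fin M) (Fin N) ℝ) : frobSq A = trace (Aᵀ * A) := by
  simp only [frobSq, trace, diag_apply, mul_apply, transpose_apply, sq]
  exact Finset.sum_comm

theorem frobSq_nonneg (A : Matrix (Fin M) (Fin N) ℝ) : 0 ≤ frobSq A :=
  Finset.sum_nonneg fun _ _ => Finset.sum_nonneg fun _ _ => sq_nonneg _

theorem frobSq_sub (B C : Matrix (Fin M) (Fin N) ℝ) :
    frobSq (B - C) = frobSq B - 2 * trace (Bᵀ * C) + frobSq C := by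
  have h : trace (Cᵀ * B) = trace (Bᵀ * C) := by
    rw [← trace_transpose, transpose_mul, transpose_transpose]
  simp only [frobSq_eq_trace, transpose_sub, Matrix.sub_mul, Matrix.mul_sub, trace_sub, h]
  ring

theorem half_frobSq_sub_add_le_of_trace_le (g : Matrix (Fin M) (Fin N) ℝ → ℝ)
    {X A₀ : Matrix (Fin M) (Fin N) ℝ} (h₀ : trace ((X - A₀)ᵀ * A₀) = g A₀)
    (h : ∀ A, trace ((X - A₀)ᵀ * A) ≤ g A) (A : Matrix (Fin M) (Fin N) ℝ) :
    1 / 2 * frobSq (X - A₀) + g A₀ ≤ 1 / 2 * frobSq (X - A) + g A := by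
  have h_expand : frobSq (X - A) = frobSq (X - A₀) - 2 * trace ((X - A₀)ᵀ * (A - A₀))
      + frobSq (A - A₀) := by
    rw [← frobSq_sub, sub_sub_sub_cancel_right]
  rw [Matrix.mul_sub, trace_sub, h₀] at h_expand
  linarith [h A, frobSq_nonneg (A - A₀)]

end FrobeniusNorm

section NuclearNorm

variable {M N : ℕ}

theorem nuclearNorm_nonneg (A : Matrix (Fin M) (Fin N) ℝ) : 0 ≤ nuclearNorm A :=
  Finset.sum_nonneg fun _ _ => Real.sqrt_nonneg _

theorem nuclearNorm_eq_trace_sqrt (A : Matrix (Fin M) (Fin N) ℝ) :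
    nuclearNorm A = trace (CFC.sqrt (Aᴴ * A)) := by
  have hH := isHermitian_conjTranspose_mul_self A
  have hA : 0 ≤ Aᴴ * A := nonneg_iff_posSemidef.2 (posSemidef_conjTranspose_mul_self A)
  rw [CFC.sqrt_eq_real_sqrt _ hA, cfcₙ_eq_cfc, hH.cfc_eq, IsHermitian.cfc,
    Unitary.conjStarAlgAut_apply, trace_mul_cycle, Unitary.coe_star_mul_self, Matrix.one_mul,
    trace_diagonal]
  rfl

theorem nuclearNorm_mul_diagonal_mul_transpose {P : ℕ} {U : Matrix (Fin M) (Fin P) ℝ}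
    {V : Matrix (Fin N) (Fin P) ℝ} (hU : Uᵀ * U = 1) (hV : Vᵀ * V = 1) {s : Fin P → ℝ}
    (hs : ∀ r, 0 ≤ s r) : nuclearNorm (U * diagonal s * Vᵀ) = ∑ r, s r := by
  rw [nuclearNorm_eq_trace_sqrt, sqrt_conjTranspose_mul_self_of_svd hU hV hs,
    trace_mul_diagonal_mul_transpose hV]

theorem trace_transpose_mul_le_l2_opNorm_mul_nuclearNorm (B A : Matrix (Fin M) (Fin N) ℝ) :
    trace (Bᵀ * A) ≤ ‖B‖ * nuclearNorm A := by
  have h_norm := norm_toEuclideanLin_eigenvectorBasis A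
  set b := (isHermitian_conjTranspose_mul_self A).eigenvectorBasis
  calc trace (Bᵀ * A) = ∑ i, ⟪toEuclideanLin B (b i), toEuclideanLin A (b i)⟫_ℝ := by
        simp only [trace_eq_sum_inner_toEuclideanLin _ b, inner_toEuclideanLin_transpose_mul]
    _ ≤ ∑ i, ‖B‖ * ‖toEuclideanLin A (b i)‖ := by
        gcongr with i
        refine (real_inner_le_norm _ _).trans (mul_le_mul_of_nonneg_right ?_ (norm_nonneg _))
        simpa [b.orthonormal.1 i] using norm_toEuclideanLin_le B (b i)
    _ = ‖B‖ * nuclearNorm A := by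
        simp only [nuclearNorm, Finset.mul_sum, h_norm]

end NuclearNorm

/-- Proposition 2 (soft-thresholded SVD): if `X = U D Vᵀ` is a singular value decomposition
of `X` (with `P = min M N`, `U`, `V` having orthonormal columns and `D` diagonal with
nonnegative entries), then `A* = U D̃ Vᵀ`, where `D̃[r,r] = max (D[r,r] − λ) 0`, minimizes
`A ↦ ½‖X − A‖_F² + λ‖A‖_*` over all real `M × N` matrices. -/
theorem soft_threshold_svd_minimizes_nuclear_penalized
    {M N : ℕ}
    (X : Matrix (Fin M) (Fin N) ℝ)
    (U : Matrix (Fin M) (Fin (min M N)) ℝ)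
    (V : Matrix (Fin N) (Fin (min M N)) ℝ)
    (D : Matrix (Fin (min M N)) (Fin (min M N)) ℝ)
    (hU : Uᵀ * U = 1) (hV : Vᵀ * V = 1)
    (hDdiag : ∀ r s, r ≠ s → D r s = 0) (hDnonneg : ∀ r, 0 ≤ D r r)
    (hX : X = U * D * Vᵀ)
    (lam : ℝ) (hlam : 0 ≤ lam) :
    ∀ A : Matrix (Fin M) (Fin N) ℝ,
      (1 / 2) * frobSq (X - U * (Matrix.diagonal fun r => max (D r r - lam) 0) * Vᵀ)
          + lam * nuclearNorm (U * (Matrix.diagonal fun r => max (D r r - lam) 0) * Vᵀ)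
        ≤ (1 / 2) * frobSq (X - A) + lam * nuclearNorm A := by
  set S : Fin (min M N) → ℝ := fun r => max (D r r - lam) 0
  set C : Fin (min M N) → ℝ := fun r => min (D r r) lam
  have h_split : ∀ r, D r r - S r = C r := fun r => by
    rcases le_total (D r r) lam with h | h <;> simp [S, C, h, sub_nonpos.2, sub_nonneg.2]
  have h_residual : X - U * diagonal S * Vᵀ = U * diagonal C * Vᵀ := by
    rw [hX, ← (isDiag_iff_diagonal_diag D).1 hDdiag, ← Matrix.sub_mul, ← Matrix.mul_sub,
      diagonal_sub]
    simp only [diag_apply, h_split]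
  have h_C_norm : ‖C‖ ≤ lam := (pi_norm_le_iff_of_nonneg hlam).2 fun r => by
    rw [Real.norm_of_nonneg (le_min (hDnonneg r) hlam)]
    exact min_le_right _ _
  have h_CS : ∀ r, C r * S r = lam * S r := fun r => by
    rcases le_total (D r r) lam with h | h <;> simp [S, C, h, sub_nonpos.2]
  refine half_frobSq_sub_add_le_of_trace_le (fun A => lam * nuclearNorm A) ?_ fun A => ?_
  · rw [h_residual, trace_transpose_mul_of_svd hU hV,
      nuclearNorm_mul_diagonal_mul_transpose hU hV fun r => le_max_right _ _, Finset.mul_sum]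
    exact Finset.sum_congr rfl fun r _ => h_CS r
  · rw [h_residual]
    refine (trace_transpose_mul_le_l2_opNorm_mul_nuclearNorm _ A).trans ?_
    gcongr
    · exact nuclearNorm_nonneg A
    · exact (l2_opNorm_mul_diagonal_mul_transpose_le hU hV C).trans h_C_norm
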